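/- arXiv:2202.01052 — 2 statements merged into one kernel-verified Lean document; each statement's English description precedes it below -/
import Mathlib

section
/- Let a, b_1, l be integers with l ≥ 1. The open interval I = (min(b_1, (−a−b_1−1)/2), max(b_1 − 1, (−a−b_1−1)/2)) of real numbers contains exactly l integers if and only if |a + 3b_1| ∈ {2l+2, 2l+3}. -/
/-!
An integer lies strictly between the reals `x` and `y` iff it lies strictly between `⌊x⌋` and `⌈y⌉`.
Since floor and ceiling are monotone, with `c = -a - b₁ - 1` the interval contains
`max (b₁ - 1) ⌈c/2⌉ - min b₁ ⌊c/2⌋ - 1` integers, and comparing `b₁` with `c/2` and splitting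
on the parity of `c` turns this count into `(|a + 3b₁| - 2) / 2`.
-/

open Finset

theorem Int.ncard_setOf_lt_and_lt {R : Type*} [Ring R] [LinearOrder R] [FloorRing R] (x y : R) :
    {t : ℤ | x < t ∧ (t : R) < y}.ncard = (⌈y⌉ - ⌊x⌋ - 1).toNat := by
  have hset : {t : ℤ | x < t ∧ (t : R) < y} = ↑(Ioo ⌊x⌋ ⌈y⌉) := by
    ext t
    simp [Int.floor_lt, Int.lt_ceil]
  rw [hset, Set.ncard_coe_finset, Int.card_Ioo]

section Halves

variable {R : Type*} [Field R] [LinearOrder R] [IsStrictOrderedRing R] [FloorRing R]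

theorem Int.floor_intCast_div_two (c : ℤ) : ⌊(c : R) / 2⌋ = c / 2 := by
  rw [← Nat.cast_ofNat, Int.floor_div_natCast, Int.floor_intCast]
  rfl

theorem Int.ceil_intCast_div_two (c : ℤ) : ⌈(c : R) / 2⌉ = -(-c / 2) := by
  rw [← neg_neg ((c : R) / 2), Int.ceil_neg, ← neg_div, ← Int.cast_neg, Int.floor_intCast_div_two]

end Halves

/-- The open real interval
`I = (min(b₁, (−a−b₁−1)/2), max(b₁−1, (−a−b₁−1)/2))` contains exactly `l ≥ 1`
integers if and only if `|a + 3b₁| ∈ {2l+2, 2l+3}`. -/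
theorem stmt_9 (a b1 l : ℤ) (hl : 1 ≤ l) :
    {t : ℤ | min (b1 : ℝ) ((-a - b1 - 1) / 2) < (t : ℝ) ∧
        (t : ℝ) < max ((b1 : ℝ) - 1) ((-a - b1 - 1) / 2)}.ncard = l.toNat ↔
      |a + 3 * b1| = 2 * l + 2 ∨ |a + 3 * b1| = 2 * l + 3 := by
  have hc : (-a - b1 - 1 : ℝ) = ((-a - b1 - 1 : ℤ) : ℝ) := by push_cast; ring
  rw [Int.ncard_setOf_lt_and_lt, Int.ceil_mono.map_max, Int.floor_mono.map_min, hc,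
    Int.ceil_intCast_div_two, Int.floor_intCast_div_two, Int.floor_intCast,
    ← Int.cast_one, ← Int.cast_sub, Int.ceil_intCast, Int.abs_eq_natAbs]
  omega
end

section
/- Let E be a special rank-2 l-away ACM vector bundle on a del Pezzo surface X with index i_X and c_1(E) = c·h. Let k_0 and k_0 + s be the smallest and largest integers t with H^1(X, E(t·h)) ≠ 0. Then Serre duality h^1(E(k_0·h)) = h^1(E((−c − k_0 − i_X)·h)) forces c = −2k_0 − i_X − s. -/
/-! Serre duality `t ↦ -c - iX - t` is a reflection of `ℤ` preserving the support of `h¹(E(·))`.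
A reflection mapping a nonempty interval into itself must swap its endpoints, so its centre
`-c - iX` equals `k₀ + (k₀ + s)`. -/

theorem Int.eq_add_of_mapsTo_sub_Icc {m M a : ℤ} (hmM : m ≤ M)
    (h : Set.MapsTo (a - ·) (Set.Icc m M) (Set.Icc m M)) : a = m + M := by
  have hm := h ⟨le_rfl, hmM⟩
  have hM := h ⟨hmM, le_rfl⟩
  simp only [Set.mem_Icc] at hm hM
  omega

/-- Let `h1 t` denote `h¹(X, E(t·h))` for a special rank-2 `l`-away ACM bundle
`E` on a del Pezzo surface with index `iX` and `c₁(E) = c·h`. If `k₀` and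
`k₀ + s` are the smallest and largest integers `t` with `h1 t ≠ 0`, then Serre
duality `h1 t = h1 (−c − t − iX)` forces `c = −2k₀ − iX − s`. -/
theorem stmt_15 (h1 : ℤ → ℕ) (c iX k0 s : ℤ) (hs : 0 ≤ s)
    (hrange : ∀ t : ℤ, h1 t ≠ 0 ↔ k0 ≤ t ∧ t ≤ k0 + s)
    (serre : ∀ t : ℤ, h1 t = h1 (-c - t - iX)) :
    c = -2 * k0 - iX - s := by
  have hreflect : Set.MapsTo ((-c - iX) - ·) (Set.Icc k0 (k0 + s)) (Set.Icc k0 (k0 + s)) := by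
    intro t ht
    have hne : h1 (-c - t - iX) ≠ 0 := serre t ▸ (hrange t).mpr ht
    exact (hrange (-c - iX - t)).mp (by rwa [show -c - iX - t = -c - t - iX by ring])
  have hcentre := Int.eq_add_of_mapsTo_sub_Icc (by omega) hreflect
  omega
end
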